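/- arXiv:2210.10345 — 2 statements merged into one kernel-verified Lean document; each statement's English description precedes it below -/
import Mathlib

section
/- Let F : [0,∞) → ℂ and let 𝓕(z) = ∫_0^∞ e^{-zt} F(t) dt be its Laplace transform. Define K and M by the coupled integral equations K(t) = 1 − i∫_0^t e^{iω₀s} M(s) ds and M(t) = −i∫_0^t e^{-iω₀s} F(t−s) K(s) ds. Then the Laplace transform of K satisfies 𝒦(z) = 1/(z + 𝓕(z − iω₀)), provided all Laplace transforms converge for Re z sufficiently large. -/
/-!
Write `K(t) = 1 + ∫_0^t h` with `h(s) = -i e^{iω₀s} M(s)`. Integrating `e^{-zt} K(t)` over `(0, T]`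
and exchanging the order of integration gives
`e^{-zT} K(T) = 1 + ∫_0^T e^{-zs} h(s) ds - z ∫_0^T e^{-zt} K(t) dt`; the left side is integrable
on `(0, ∞)` and has a limit, so that limit is `0`, which is the rule `z 𝒦(z) = 1 + ℋ(z)` with no
regularity of `K` needed. The factor `e^{iω₀s}` shifts `ℋ(z)` to `-i 𝓜(z - iω₀)`, and `M` is `-i`
times the causal convolution of `e^{-iω₀s} K(s)` with `F`, whose transform at `z - iω₀` is
`𝒦(z) 𝓕(z - iω₀)`. Hence `z 𝒦 = 1 - 𝒦 𝓕(z - iω₀)`.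
-/

open MeasureTheory Set Filter Complex

/-- The Laplace transform `𝓕(z) = ∫_0^∞ e^{-zt} F(t) dt`. -/
noncomputable def laplaceTransform (F : ℝ → ℂ) (z : ℂ) : ℂ :=
  ∫ t in Set.Ioi (0 : ℝ), Complex.exp (-z * t) * F t

lemma integral_mul_cexp_neg_mul (z : ℂ) (a b : ℝ) :
    ∫ t in a..b, z * cexp (-z * t) = cexp (-z * a) - cexp (-z * b) := by
  have hderiv (t : ℝ) : HasDerivAt (fun t : ℝ => -cexp (-z * t)) (z * cexp (-z * t)) t :=
    (((hasDerivAt_id (t : ℂ)).const_mul (-z)).cexp.comp_ofReal).fun_neg.congr_deriv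
      (by simp only [id, mul_one]; ring)
  rw [intervalIntegral.integral_eq_sub_of_hasDerivAt (fun t _ => hderiv t)
    ((by fun_prop : Continuous fun t : ℝ => z * cexp (-z * t)).intervalIntegrable a b)]
  ring

lemma cexp_neg_mul_mul_cexp_mul (z a : ℂ) (f : ℂ) (t : ℝ) :
    cexp (-z * t) * (cexp (a * t) * f) = cexp (-(z - a) * t) * f := by
  rw [← mul_assoc, ← Complex.exp_add]
  ring_nf

lemma MeasureTheory.IntegrableOn.eq_zero_of_tendsto_atTop {E : Type*} [NormedAddCommGroup E]
    {f : ℝ → E} {a : ℝ} (hf : IntegrableOn f (Ioi a)) {L : E} (hL : Tendsto f atTop (nhds L)) : L = 0 := by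
  refine IntegrableAtFilter.eq_zero_of_tendsto ⟨Ioi a, Ioi_mem_atTop a, hf⟩ (fun s hs => ?_) hL
  obtain ⟨b, hb⟩ := mem_atTop_sets.1 hs
  rw [← top_le_iff, ← Real.volume_Ici (a := b)]
  exact measure_mono hb

lemma integral_Ioc_mul_integral_Ioc_swap {𝕜 : Type*} [RCLike 𝕜] {φ h : ℝ → 𝕜} {a b : ℝ}
    (hφ : IntegrableOn φ (Ioc a b)) (hh : IntegrableOn h (Ioc a b)) :
    ∫ t in Ioc a b, φ t * ∫ s in Ioc a t, h s = ∫ s in Ioc a b, (∫ t in Ioc s b, φ t) * h s := by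
  let μ := volume.restrict (Ioc a b)
  let S : Set (ℝ × ℝ) := {p | p.2 ≤ p.1}
  let u : ℝ × ℝ → 𝕜 := S.indicator fun p => φ p.1 * h p.2
  have hu : Integrable u (μ.prod μ) :=
    (hφ.mul_prod hh).indicator (measurableSet_le measurable_snd measurable_fst)
  have hleft : ∫ t, ∫ s, u (t, s) ∂μ ∂μ = ∫ t in Ioc a b, φ t * ∫ s in Ioc a t, h s := by
    refine setIntegral_congr_fun measurableSet_Ioc fun t ht => ?_
    have hslice : (fun s => u (t, s)) = (Iic t).indicator fun s => φ t * h s := by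
      ext s; by_cases hst : s ≤ t <;> simp [u, S, hst]
    rw [hslice, setIntegral_indicator measurableSet_Iic, Ioc_inter_Iic, min_eq_right ht.2,
      integral_const_mul]
  have hright : ∫ s, ∫ t, u (t, s) ∂μ ∂μ = ∫ s in Ioc a b, (∫ t in Ioc s b, φ t) * h s := by
    refine setIntegral_congr_fun measurableSet_Ioc fun s hs => ?_
    have hslice : (fun t => u (t, s)) = (Ici s).indicator fun t => φ t * h s := by
      ext t; by_cases hst : s ≤ t <;> simp [u, S, hst]
    have hinter : Ioc a b ∩ Ici s = Icc s b := by
      ext t; simp only [mem_inter_iff, mem_Ioc, mem_Ici, mem_Icc]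
      constructor
      · rintro ⟨⟨-, htb⟩, hst⟩; exact ⟨hst, htb⟩
      · rintro ⟨hst, htb⟩; exact ⟨⟨hs.1.trans_le hst, htb⟩, hst⟩
    rw [hslice, setIntegral_indicator measurableSet_Ici, hinter, integral_Icc_eq_integral_Ioc,
      integral_mul_const]
  rw [← hleft, integral_integral_swap (f := fun t s => u (t, s)) hu, hright]

lemma MeasureTheory.IntegrableOn.integrableOn_Ioc_of_cexp_mul {f : ℝ → ℂ} {z : ℂ}
    (hf : IntegrableOn (fun t : ℝ => cexp (-z * t) * f t) (Ioi 0)) (T : ℝ) :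
    IntegrableOn f (Ioc 0 T) := by
  have hcont : ContinuousOn (fun t : ℝ => cexp (z * t)) (Icc 0 T) := by fun_prop
  refine ((hf.mono_set Ioc_subset_Ioi_self).continuousOn_mul_of_subset hcont isCompact_Icc
    measurableSet_Ioc Ioc_subset_Icc_self).congr_fun (fun t _ => ?_) measurableSet_Ioc
  simp [← mul_assoc, ← Complex.exp_add]

lemma mul_integral_cexp_mul_integral_Ioc (z : ℂ) {h : ℝ → ℂ} {T : ℝ}
    (hh : IntegrableOn h (Ioc 0 T)) :
    z * ∫ t in Ioc 0 T, cexp (-z * t) * ∫ s in Ioc 0 t, h s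
      = (∫ s in Ioc 0 T, cexp (-z * s) * h s) - cexp (-z * T) * ∫ s in Ioc 0 T, h s := by
  have hkernel : IntegrableOn (fun t : ℝ => z * cexp (-z * t)) (Ioc 0 T) :=
    (by fun_prop : Continuous fun t : ℝ => z * cexp (-z * t)).integrableOn_Ioc
  have hinner : ∀ s ∈ Ioc 0 T, (∫ t in Ioc s T, z * cexp (-z * t)) * h s
      = cexp (-z * s) * h s - cexp (-z * T) * h s := by
    intro s hs
    rw [← intervalIntegral.integral_of_le hs.2, integral_mul_cexp_neg_mul, sub_mul]
  have hexp_h : IntegrableOn (fun s : ℝ => cexp (-z * s) * h s) (Ioc 0 T) :=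
    hh.continuousOn_mul_of_subset (by fun_prop) isCompact_Icc measurableSet_Ioc
      Ioc_subset_Icc_self
  rw [← integral_const_mul]
  simp_rw [← mul_assoc]
  rw [integral_Ioc_mul_integral_Ioc_swap hkernel hh, setIntegral_congr_fun measurableSet_Ioc hinner,
    integral_sub hexp_h (hh.const_mul _), integral_const_mul]

lemma cexp_mul_eq_of_eq_add_integral {K h : ℝ → ℂ} {k₀ z : ℂ} {T : ℝ} (hT : 0 ≤ T)
    (hK : ∀ t, 0 ≤ t → K t = k₀ + ∫ s in 0..t, h s) (hh : IntegrableOn h (Ioc 0 T))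
    (hKi : IntegrableOn (fun t : ℝ => cexp (-z * t) * K t) (Ioc 0 T)) :
    cexp (-z * T) * K T
      = k₀ + (∫ s in Ioc 0 T, cexp (-z * s) * h s) - z * ∫ t in Ioc 0 T, cexp (-z * t) * K t := by
  have hexp : z * ∫ t in Ioc 0 T, cexp (-z * t) = 1 - cexp (-z * T) := by
    rw [← integral_const_mul, ← intervalIntegral.integral_of_le hT, integral_mul_cexp_neg_mul]
    simp
  have hprimitive : ∫ t in Ioc 0 T, cexp (-z * t) * ∫ s in Ioc 0 t, h s
      = (∫ t in Ioc 0 T, cexp (-z * t) * K t) - k₀ * ∫ t in Ioc 0 T, cexp (-z * t) := by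
    rw [← integral_const_mul, ← integral_sub hKi
      ((by fun_prop : Continuous fun t : ℝ => k₀ * cexp (-z * t)).integrableOn_Ioc)]
    refine setIntegral_congr_fun measurableSet_Ioc fun t ht => ?_
    rw [hK t ht.1.le, intervalIntegral.integral_of_le ht.1.le]
    ring
  rw [hK T hT, intervalIntegral.integral_of_le hT]
  linear_combination mul_integral_cexp_mul_integral_Ioc z hh - z * hprimitive + k₀ * hexp

theorem mul_laplaceTransform_of_eq_add_integral {K h : ℝ → ℂ} {k₀ z : ℂ}
    (hK : ∀ t, 0 ≤ t → K t = k₀ + ∫ s in 0..t, h s)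
    (hKi : IntegrableOn (fun t : ℝ => cexp (-z * t) * K t) (Ioi 0))
    (hhi : IntegrableOn (fun t : ℝ => cexp (-z * t) * h t) (Ioi 0)) :
    z * laplaceTransform K z = k₀ + laplaceTransform h z := by
  have hlim : Tendsto (fun T : ℝ => cexp (-z * T) * K T) atTop
      (nhds (k₀ + laplaceTransform h z - z * laplaceTransform K z)) := by
    refine Tendsto.congr' ?_ ((tendsto_const_nhds.add
      (intervalIntegral_tendsto_integral_Ioi 0 hhi tendsto_id)).sub
      ((intervalIntegral_tendsto_integral_Ioi 0 hKi tendsto_id).const_mul z))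
    filter_upwards [eventually_ge_atTop 0] with T hT
    rw [id, intervalIntegral.integral_of_le hT, intervalIntegral.integral_of_le hT]
    exact (cexp_mul_eq_of_eq_add_integral hT hK (hhi.integrableOn_Ioc_of_cexp_mul T)
      (hKi.mono_set Ioc_subset_Ioi_self)).symm
  linear_combination -(hKi.eq_zero_of_tendsto_atTop hlim)

lemma laplaceTransform_const_mul (a : ℂ) (f : ℝ → ℂ) (z : ℂ) :
    laplaceTransform (fun t => a * f t) z = a * laplaceTransform f z := by
  simp only [laplaceTransform, ← integral_const_mul, mul_left_comm]

lemma laplaceTransform_cexp_mul (a : ℂ) (f : ℝ → ℂ) (z : ℂ) :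
    laplaceTransform (fun t : ℝ => cexp (a * t) * f t) z = laplaceTransform f (z - a) := by
  simp only [laplaceTransform, cexp_neg_mul_mul_cexp_mul]

theorem laplaceTransform_convolution {f g : ℝ → ℂ} {z : ℂ}
    (hf : IntegrableOn (fun t : ℝ => cexp (-z * t) * f t) (Ioi 0))
    (hg : IntegrableOn (fun t : ℝ => cexp (-z * t) * g t) (Ioi 0)) :
    laplaceTransform (fun t => ∫ s in 0..t, f s * g (t - s)) z
      = laplaceTransform f z * laplaceTransform g z := by
  have hconv := integral_posConvolution hf hg (ContinuousLinearMap.mul ℝ ℂ)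
  simp only [ContinuousLinearMap.mul_apply'] at hconv
  rw [laplaceTransform, laplaceTransform, laplaceTransform, ← hconv]
  refine setIntegral_congr_fun measurableSet_Ioi fun t _ => ?_
  rw [← intervalIntegral.integral_const_mul]
  refine intervalIntegral.integral_congr fun s _ => ?_
  rw [show cexp (-z * t) = cexp (-z * s) * cexp (-z * ↑(t - s)) by
    rw [← Complex.exp_add]; push_cast; ring_nf]
  ring

/-- Friedrichs–Lee model: if `K(t) = 1 − i∫_0^t e^{iω₀s} M(s) ds` and
`M(t) = −i∫_0^t e^{-iω₀s} F(t−s) K(s) ds`, then the Laplace transform of `K` satisfies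
`𝒦(z) = 1/(z + 𝓕(z − iω₀))`, provided all Laplace transforms converge for `Re z` large. -/
theorem stmt_4 (F K M : ℝ → ℂ) (ω₀ : ℝ) (c : ℝ)
    (hK : ∀ t : ℝ, K t =
      1 - Complex.I * ∫ s in (0 : ℝ)..t, Complex.exp (Complex.I * ω₀ * s) * M s)
    (hM : ∀ t : ℝ, M t =
      -Complex.I * ∫ s in (0 : ℝ)..t, Complex.exp (-Complex.I * ω₀ * s) * F (t - s) * K s)
    (hF : ∀ z : ℂ, c < z.re →
      IntegrableOn (fun t : ℝ => Complex.exp (-z * t) * F t) (Set.Ioi 0))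
    (hKint : ∀ z : ℂ, c < z.re →
      IntegrableOn (fun t : ℝ => Complex.exp (-z * t) * K t) (Set.Ioi 0))
    (hMint : ∀ z : ℂ, c < z.re →
      IntegrableOn (fun t : ℝ => Complex.exp (-z * t) * M t) (Set.Ioi 0)) :
    ∀ z : ℂ, c < z.re →
      laplaceTransform K z = 1 / (z + laplaceTransform F (z - Complex.I * ω₀)) := by
  intro z hz
  set w := z - I * ω₀ with hw_def
  have hw : c < w.re := by simpa [w] using hz
  have hKz : z * laplaceTransform K z = 1 + -I * laplaceTransform M w := by
    have hKM := mul_laplaceTransform_of_eq_add_integral (k₀ := 1)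
      (h := fun s => -I * (cexp (I * ω₀ * s) * M s))
      (fun t _ => by rw [hK t, intervalIntegral.integral_const_mul]; ring) (hKint z hz)
      (by simpa only [IntegrableOn, mul_left_comm _ (-I), cexp_neg_mul_mul_cexp_mul, ← hw_def] using
        (hMint w hw).const_mul (-I))
    rwa [laplaceTransform_const_mul, laplaceTransform_cexp_mul] at hKM
  have hMw : laplaceTransform M w = -I * (laplaceTransform K z * laplaceTransform F w) := by
    have hzw : w - -I * ω₀ = z := by ring
    have hMconv : M = fun t => -I * ∫ s in 0..t, (cexp (-I * ω₀ * s) * K s) * F (t - s) := by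
      funext t
      simp only [hM t, mul_right_comm _ (F _)]
    have hKshift : IntegrableOn (fun t : ℝ => cexp (-w * t) * (cexp (-I * ω₀ * t) * K t))
        (Ioi 0) := by
      simpa only [cexp_neg_mul_mul_cexp_mul, hzw] using hKint z hz
    rw [hMconv, laplaceTransform_const_mul, laplaceTransform_convolution hKshift (hF w hw),
      laplaceTransform_cexp_mul, hzw]
  have hKF : laplaceTransform K z * (z + laplaceTransform F w) = 1 := by
    linear_combination hKz - I * hMw + laplaceTransform K z * laplaceTransform F w * I_sq
  rw [eq_div_iff (right_ne_zero_of_mul_eq_one hKF)]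
  exact hKF
end

section
/- Let H̃(t) = A(t)⊗σ⁺ + A'(t)⊗σ⁻ + i b 𝟙_F ⊗ |1⟩⟨1| act on F ⊗ ℂ², where A(t), A'(t) are operators on F commuting with σ^±, and b ∈ ℂ. Then ⟨1| H̃(t₁)⋯H̃(t_n) |1⟩ = ∑_{k=0}^{n} (ib)^k ∑ A(t_{p₁})A'(t_{p₁+1}) ⋯ A(t_{p_{(n−k)/2}})A'(t_{p_{(n−k)/2}+1}), where the inner sum runs over all index sequences 1 ≤ p₁, p₁+1 < p₂, …, p_{(n−k)/2−1}+1 < p_{(n−k)/2} ≤ n−1 selecting (n−k)/2 disjoint pairs of adjacent positions among {1,…,n} (the sum is empty unless n−k is even). -/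
/-!
Let `E c f g n` be the `(1, 1)` entry of the product of the matrices `!![0, g q; f q, c]`,
`q < n`. Multiplying out the first two factors gives the three-term recurrence
`E (n + 2) = c • E' (n + 1) + f 0 * g 1 * E'' n`, where `'` and `''` shift the sequences by one
and two. The pair expansion obeys the same recurrence: a selection of disjoint adjacent pairs
either avoids position `0`, and is then a selection in the shifted range, or begins with the
pair `(0, 1)`, whose removal leaves a selection in the range shifted by two.
-/

open Finset

section AdjacentPairs

variable {R : Type*} [Semiring R]

def adjacentPairSelections (n m : ℕ) : Finset (Fin m → Fin n) :=
  univ.filter fun p =>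
    (∀ r, (p r : ℕ) + 1 < n) ∧ ∀ r s : Fin m, r < s → (p r : ℕ) + 1 < p s

@[simp]
theorem mem_adjacentPairSelections {n m : ℕ} {p : Fin m → Fin n} :
    p ∈ adjacentPairSelections n m ↔
      (∀ r, (p r : ℕ) + 1 < n) ∧ ∀ r s : Fin m, r < s → (p r : ℕ) + 1 < p s := by
  simp [adjacentPairSelections]

def adjacentPairWeight (f g : ℕ → R) {n m : ℕ} (p : Fin m → Fin n) : R :=
  (List.ofFn fun r => f (p r) * g (p r + 1)).prod

def adjacentPairSum (f g : ℕ → R) (n m : ℕ) : R :=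
  ∑ p ∈ adjacentPairSelections n m, adjacentPairWeight f g p

theorem adjacentPairSum_zero_right (f g : ℕ → R) (n : ℕ) : adjacentPairSum f g n 0 = 1 := by
  simp [adjacentPairSum, adjacentPairSelections, adjacentPairWeight]

theorem two_mul_le_of_mem_adjacentPairSelections {n m : ℕ} {p : Fin m → Fin n}
    (hp : p ∈ adjacentPairSelections n m) (r : Fin m) : 2 * (r : ℕ) ≤ p r := by
  obtain ⟨r, hr⟩ := r
  induction r with
  | zero => simp
  | succ r ih =>
    have hgap := (mem_adjacentPairSelections.1 hp).2 ⟨r, by omega⟩ ⟨r + 1, hr⟩ (by simp)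
    have := ih (by omega)
    simp only at hgap this ⊢
    omega

theorem adjacentPairSelections_eq_empty {n m : ℕ} (h : n < 2 * m) :
    adjacentPairSelections n m = ∅ := by
  refine eq_empty_of_forall_notMem fun p hp => ?_
  have hlast := two_mul_le_of_mem_adjacentPairSelections hp ⟨m - 1, by omega⟩
  have := (mem_adjacentPairSelections.1 hp).1 ⟨m - 1, by omega⟩
  simp only at hlast this
  omega

theorem adjacentPairSum_eq_zero {n m : ℕ} (f g : ℕ → R) (h : n < 2 * m) :
    adjacentPairSum f g n m = 0 := by
  simp [adjacentPairSum, adjacentPairSelections_eq_empty h]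

theorem pos_of_mem_adjacentPairSelections {n m : ℕ} {p : Fin (m + 1) → Fin n}
    (hp : p ∈ adjacentPairSelections n (m + 1)) (h0 : (p 0 : ℕ) ≠ 0) (r : Fin (m + 1)) :
    0 < (p r : ℕ) := by
  rcases Fin.eq_zero_or_eq_succ r with rfl | ⟨r, rfl⟩
  · omega
  · have := (mem_adjacentPairSelections.1 hp).2 0 r.succ (Fin.succ_pos r)
    omega

theorem two_le_succ_of_mem_adjacentPairSelections {n m : ℕ} {p : Fin (m + 1) → Fin n}
    (hp : p ∈ adjacentPairSelections n (m + 1)) (h0 : (p 0 : ℕ) = 0) (r : Fin m) :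
    2 ≤ (p r.succ : ℕ) := by
  have := (mem_adjacentPairSelections.1 hp).2 0 r.succ (Fin.succ_pos r)
  omega

theorem sum_adjacentPairSelections_filter_ne_zero (f g : ℕ → R) (n m : ℕ) :
    ∑ p ∈ (adjacentPairSelections (n + 2) (m + 1)).filter (fun p => ¬(p 0 : ℕ) = 0),
        adjacentPairWeight f g p =
      adjacentPairSum (fun i => f (i + 1)) (fun i => g (i + 1)) (n + 1) (m + 1) := by
  symm
  refine sum_bij' (fun q _ => Fin.succ ∘ q)
    (fun p _ r => ⟨p r - 1, by have := (p r).isLt; omega⟩) ?_ ?_ ?_ ?_ ?_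
  · intro q hq
    simp only [mem_filter, mem_adjacentPairSelections, Function.comp_apply, Fin.val_succ] at hq ⊢
    exact ⟨⟨fun r => by have := hq.1 r; omega,
      fun r s hrs => by have := hq.2 r s hrs; omega⟩, by omega⟩
  · intro p hp
    have hpos := pos_of_mem_adjacentPairSelections (mem_filter.1 hp).1 (mem_filter.1 hp).2
    obtain ⟨hlt, hgap⟩ := mem_adjacentPairSelections.1 (mem_filter.1 hp).1
    simp only [mem_adjacentPairSelections]
    exact ⟨fun r => by have := hlt r; have := hpos r; omega,
      fun r s hrs => by have := hgap r s hrs; have := hpos r; omega⟩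
  · intro q _
    funext r
    ext
    simp
  · intro p hp
    have hpos := pos_of_mem_adjacentPairSelections (mem_filter.1 hp).1 (mem_filter.1 hp).2
    funext r
    ext
    simp only [Function.comp_apply, Fin.val_succ]
    have := hpos r
    omega
  · intro q _
    rfl

theorem sum_adjacentPairSelections_filter_eq_zero (f g : ℕ → R) (n m : ℕ) :
    ∑ p ∈ (adjacentPairSelections (n + 2) (m + 1)).filter (fun p => (p 0 : ℕ) = 0),
        adjacentPairWeight f g p =
      f 0 * g 1 * adjacentPairSum (fun i => f (i + 2)) (fun i => g (i + 2)) n m := by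
  rw [adjacentPairSum, mul_sum]
  symm
  refine sum_bij' (fun q _ => Fin.cons 0 fun r => (q r).addNat 2)
    (fun p hp r => ⟨p r.succ - 2, by
      have := two_le_succ_of_mem_adjacentPairSelections (mem_filter.1 hp).1 (mem_filter.1 hp).2 r
      have := (mem_adjacentPairSelections.1 (mem_filter.1 hp).1).1 r.succ
      omega⟩) ?_ ?_ ?_ ?_ ?_
  · intro q hq
    obtain ⟨hlt, hgap⟩ := mem_adjacentPairSelections.1 hq
    simp only [mem_filter, mem_adjacentPairSelections, Fin.cons_zero, Fin.val_zero, and_true]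
    constructor
    · intro r
      cases r using Fin.cases with
      | zero => simp
      | succ r => simp only [Fin.cons_succ, Fin.val_addNat]; have := hlt r; omega
    · intro r s hrs
      cases s using Fin.cases with
      | zero => exact absurd hrs (Fin.not_lt_zero _)
      | succ s =>
        cases r using Fin.cases with
        | zero => simp
        | succ r =>
          simp only [Fin.cons_succ, Fin.val_addNat]
          have := hgap r s (Fin.succ_lt_succ_iff.1 hrs)
          omega
  · intro p hp
    obtain ⟨hsel, h0⟩ := mem_filter.1 hp
    obtain ⟨hlt, hgap⟩ := mem_adjacentPairSelections.1 hsel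
    have h2 := two_le_succ_of_mem_adjacentPairSelections hsel h0
    simp only [mem_adjacentPairSelections]
    exact ⟨fun r => by have := hlt r.succ; have := h2 r; omega,
      fun r s hrs => by
        have := hgap r.succ s.succ (Fin.succ_lt_succ_iff.2 hrs); have := h2 r; omega⟩
  · intro q _
    funext r
    ext
    simp
  · intro p hp
    obtain ⟨hsel, h0⟩ := mem_filter.1 hp
    have h2 := two_le_succ_of_mem_adjacentPairSelections hsel h0
    funext r
    ext
    cases r using Fin.cases with
    | zero => simpa using h0.symm
    | succ r => simp only [Fin.cons_succ, Fin.val_addNat]; have := h2 r; omega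
  · intro q _
    simp only [adjacentPairWeight, List.ofFn_succ, List.prod_cons, Fin.cons_zero, Fin.cons_succ,
      Fin.val_zero, Fin.val_addNat, zero_add, mul_assoc, Nat.add_right_comm _ 1 2]

theorem adjacentPairSum_add_two_succ (f g : ℕ → R) (n m : ℕ) :
    adjacentPairSum f g (n + 2) (m + 1) =
      adjacentPairSum (fun i => f (i + 1)) (fun i => g (i + 1)) (n + 1) (m + 1) +
        f 0 * g 1 * adjacentPairSum (fun i => f (i + 2)) (fun i => g (i + 2)) n m := by
  rw [adjacentPairSum, ← sum_filter_not_add_sum_filter _ (fun p => (p 0 : ℕ) = 0),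
    sum_adjacentPairSelections_filter_ne_zero, sum_adjacentPairSelections_filter_eq_zero]

end AdjacentPairs

section Expansion

variable {K R : Type*} [CommSemiring K] [Semiring R] [Algebra K R]

def pairExpansionTerm (c : K) (f g : ℕ → R) (n k : ℕ) : R :=
  if (n - k) % 2 = 0 then c ^ k • adjacentPairSum f g n ((n - k) / 2) else 0

def pairExpansion (c : K) (f g : ℕ → R) (n : ℕ) : R :=
  ∑ k ∈ range (n + 1), pairExpansionTerm c f g n k

theorem pairExpansion_zero (c : K) (f g : ℕ → R) : pairExpansion c f g 0 = 1 := by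
  simp [pairExpansion, pairExpansionTerm, adjacentPairSum_zero_right]

theorem pairExpansion_one (c : K) (f g : ℕ → R) : pairExpansion c f g 1 = c • 1 := by
  simp [pairExpansion, pairExpansionTerm, sum_range_succ, adjacentPairSum_zero_right]

theorem pairExpansionTerm_add_two (c : K) (f g : ℕ → R) {n k : ℕ} (hk : k ≤ n + 2) :
    pairExpansionTerm c f g (n + 2) k =
      (if k = 0 then 0
        else c • pairExpansionTerm c (fun i => f (i + 1)) (fun i => g (i + 1)) (n + 1) (k - 1)) +
        if k ≤ n then
          f 0 * g 1 * pairExpansionTerm c (fun i => f (i + 2)) (fun i => g (i + 2)) n k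
        else 0 := by
  rcases (show k ≤ n ∨ k = n + 1 ∨ k = n + 2 by omega) with hkn | rfl | rfl
  · rw [if_pos hkn]
    by_cases hpar : (n - k) % 2 = 0
    · obtain ⟨m, hm⟩ : ∃ m, n - k = 2 * m := ⟨(n - k) / 2, by omega⟩
      have hm2 : n + 2 - k = 2 * (m + 1) := by omega
      simp only [pairExpansionTerm, hm, hm2, Nat.mul_mod_right, Nat.mul_div_cancel_left _ two_pos,
        if_true, adjacentPairSum_add_two_succ, smul_add, mul_smul_comm]
      rcases k with _ | k
      · -- `m + 1` disjoint pairs do not fit into `n + 1 = 2 * m + 1` positions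
        rw [adjacentPairSum_eq_zero _ _ (by omega), smul_zero, if_pos rfl]
      · have hm1 : n + 1 - k = 2 * (m + 1) := by omega
        simp only [Nat.add_one_ne_zero, if_false, Nat.add_sub_cancel, hm1, Nat.mul_mod_right,
          Nat.mul_div_cancel_left _ two_pos, if_true, smul_smul, pow_succ']
    · have hpar2 : ¬(n + 2 - k) % 2 = 0 := by omega
      simp only [pairExpansionTerm, if_neg hpar, if_neg hpar2, mul_zero, add_zero]
      rcases k with _ | k
      · rw [if_pos rfl]
      · have hpar1 : ¬(n + 1 - (k + 1 - 1)) % 2 = 0 := by omega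
        rw [if_neg (Nat.add_one_ne_zero k), if_neg hpar1, smul_zero]
  · simp [pairExpansionTerm]
  · simp [pairExpansionTerm, adjacentPairSum_zero_right, smul_smul, pow_succ']

theorem pairExpansion_add_two (c : K) (f g : ℕ → R) (n : ℕ) :
    pairExpansion c f g (n + 2) =
      c • pairExpansion c (fun i => f (i + 1)) (fun i => g (i + 1)) (n + 1) +
        f 0 * g 1 * pairExpansion c (fun i => f (i + 2)) (fun i => g (i + 2)) n := by
  rw [pairExpansion, sum_congr rfl fun k hk =>
      pairExpansionTerm_add_two c f g (Nat.lt_succ_iff.1 (mem_range.1 hk)),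
    sum_add_distrib, sum_range_succ' _ (n + 2), ← sum_filter]
  have hrange : (range (n + 2 + 1)).filter (· ≤ n) = range (n + 1) := by
    ext k
    simp only [mem_filter, mem_range]
    omega
  simp only [hrange, Nat.add_one_ne_zero, if_false, if_true, add_tsub_cancel_right, add_zero,
    pairExpansion, smul_sum, mul_sum]

end Expansion

section TransferMatrix

variable {K R : Type*} [CommSemiring K] [Semiring R] [Algebra K R]

def transferMatrix (c : K) (f g : ℕ → R) (q : ℕ) : Matrix (Fin 2) (Fin 2) R :=
  Matrix.of ![![0, g q], ![f q, c • 1]]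

def transferProd (c : K) (f g : ℕ → R) (n : ℕ) : Matrix (Fin 2) (Fin 2) R :=
  (List.ofFn fun q : Fin n => transferMatrix c f g q).prod

theorem transferProd_succ (c : K) (f g : ℕ → R) (n : ℕ) :
    transferProd c f g (n + 1) =
      transferMatrix c f g 0 * transferProd c (fun i => f (i + 1)) (fun i => g (i + 1)) n := by
  rw [transferProd, List.ofFn_succ, List.prod_cons]
  rfl

theorem transferMatrix_mul_apply_one_one (c : K) (f g : ℕ → R) (q : ℕ)
    (M : Matrix (Fin 2) (Fin 2) R) :
    (transferMatrix c f g q * M) 1 1 = f q * M 0 1 + c • M 1 1 := by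
  simp [transferMatrix, Matrix.mul_apply, Fin.sum_univ_two]

theorem transferMatrix_mul_apply_zero_one (c : K) (f g : ℕ → R) (q : ℕ)
    (M : Matrix (Fin 2) (Fin 2) R) :
    (transferMatrix c f g q * M) 0 1 = g q * M 1 1 := by
  simp [transferMatrix, Matrix.mul_apply, Fin.sum_univ_two]

theorem transferProd_add_two_apply_one_one (c : K) (f g : ℕ → R) (n : ℕ) :
    transferProd c f g (n + 2) 1 1 =
      c • transferProd c (fun i => f (i + 1)) (fun i => g (i + 1)) (n + 1) 1 1 +
        f 0 * g 1 * transferProd c (fun i => f (i + 2)) (fun i => g (i + 2)) n 1 1 := by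
  have hzero_one := transferMatrix_mul_apply_zero_one c (fun i => f (i + 1)) (fun i => g (i + 1)) 0
    (transferProd c (fun i => f (i + 2)) (fun i => g (i + 2)) n)
  rw [transferProd_succ, transferMatrix_mul_apply_one_one, transferProd_succ, hzero_one, add_comm,
    mul_assoc]

theorem transferProd_apply_one_one (c : K) (n : ℕ) (f g : ℕ → R) :
    transferProd c f g n 1 1 = pairExpansion c f g n := by
  induction n using Nat.twoStepInduction generalizing f g with
  | zero => simp [transferProd, pairExpansion_zero]
  | one => simp [transferProd, transferMatrix, pairExpansion_one]
  | more n ih₀ ih₁ =>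
    rw [transferProd_add_two_apply_one_one, pairExpansion_add_two, ih₀, ih₁]

end TransferMatrix

/-- Proposition 1. Represent `H̃(t) = A(t)⊗σ⁺ + A'(t)⊗σ⁻ + ib·𝟙_F⊗|1⟩⟨1|` as a 2×2
matrix over the field-operator algebra `R` (entry `(1,0)` is `A(t)`, entry `(0,1)` is
`A'(t)`, entry `(1,1)` is `ib·1`).  Then the partial matrix element
`⟨1| H̃(t₁)⋯H̃(t_n) |1⟩` equals
`∑_{k=0}^{n} (ib)^k ∑_p A(t_{p₁})A'(t_{p₁+1}) ⋯ A(t_{p_m})A'(t_{p_m+1})`,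
where `m = (n−k)/2` (the inner sum being empty unless `n−k` is even) and the inner sum
runs over all choices of `m` disjoint pairs of adjacent positions
`(p_r, p_r + 1)` among `{0,…,n−1}` (0-indexed, with `p_r + 1 < p_{r+1}`). -/
theorem stmt_10 {R : Type*} [Ring R] [Algebra ℂ R]
    (A A' : ℝ → R) (b : ℂ) (n : ℕ) (τ : ℕ → ℝ) :
    ((List.ofFn fun q : Fin n =>
        Matrix.of ![![0, A' (τ q)], ![A (τ q), (Complex.I * b) • (1 : R)]]).prod) 1 1
      = ∑ k ∈ Finset.range (n + 1),
          if (n - k) % 2 = 0 then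
            (Complex.I * b) ^ k •
              ∑ p ∈ Finset.univ.filter
                  (fun p : Fin ((n - k) / 2) → Fin n =>
                    (∀ r, (p r : ℕ) + 1 < n) ∧
                    ∀ r s : Fin ((n - k) / 2), r < s → (p r : ℕ) + 1 < (p s : ℕ)),
                (List.ofFn fun r : Fin ((n - k) / 2) =>
                  A (τ (p r : ℕ)) * A' (τ ((p r : ℕ) + 1))).prod
          else 0 :=
  transferProd_apply_one_one (Complex.I * b) n (fun i => A (τ i)) (fun i => A' (τ i))
end
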